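/- (Pythagorean Won-Loss Formula) Let X and Y be independent random variables with Weibull distributions with parameters (α_RS, β, γ) and (α_RA, β, γ) respectively, where α_RS, α_RA, γ > 0. Then Prob(X > Y) = α_RS^γ / (α_RS^γ + α_RA^γ). -/

import Mathlib

open MeasureTheory Real

/-- The Weibull probability density function with parameters `α` (scale),
`β` (shift) and `γ` (shape). -/
noncomputable def weibullPDF (α β γ : ℝ) (x : ℝ) : ℝ :=
  if β ≤ x then (γ / α) * ((x - β) / α) ^ (γ - 1) * Real.exp (-((x - β) / α) ^ γ) else 0

/-- The Weibull measure: Lebesgue measure with the Weibull density. -/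
noncomputable def weibullMeasure (α β γ : ℝ) : Measure ℝ :=
  volume.withDensity fun x => ENNReal.ofReal (weibullPDF α β γ x)

/-!
Write the Weibull density with scale `α` on `[β, ∞)` in terms of the rate `p = α ^ (-γ)`:
`f_p x = γ p (x - β) ^ (γ - 1) exp (-p (x - β) ^ γ)`, whose tail integral over `(y, ∞)` is
`exp (-p (y - β) ^ γ)`. Conditioning on `Y`, `P(X > Y) = ∫ f_q y · exp (-p (y - β) ^ γ) dy`,
and the integrand is `q / (p + q) · f_{p+q} y`, so `P(X > Y) = q / (p + q)`, which is
`αRS ^ γ / (αRS ^ γ + αRA ^ γ)` for `p = αRS ^ (-γ)`, `q = αRA ^ (-γ)`.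
-/

open Set Filter Topology

noncomputable def weibullRatePDF (β γ p x : ℝ) : ℝ :=
  γ * p * (x - β) ^ (γ - 1) * exp (-p * (x - β) ^ γ)

section RateForm

variable {β γ p : ℝ}

lemma weibullRatePDF_nonneg (hγ : 0 ≤ γ) (hp : 0 ≤ p) {x : ℝ} (hx : β ≤ x) :
    0 ≤ weibullRatePDF β γ p x := by
  unfold weibullRatePDF
  have := rpow_nonneg (sub_nonneg.2 hx) (γ - 1)
  positivity

lemma hasDerivAt_neg_exp_neg_mul_sub_rpow {x : ℝ} (hx : β < x) :
    HasDerivAt (fun y => -exp (-p * (y - β) ^ γ)) (weibullRatePDF β γ p x) x := by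
  have hpow : HasDerivAt (fun y => (y - β) ^ γ) (γ * (x - β) ^ (γ - 1)) x := by
    simpa using
      ((hasDerivAt_id x).sub_const β).rpow_const (p := γ) (Or.inl (sub_ne_zero.2 hx.ne'))
  refine ((hpow.const_mul (-p)).exp).neg.congr_deriv ?_
  unfold weibullRatePDF
  ring

lemma continuous_exp_neg_mul_sub_rpow (hγ : 0 ≤ γ) :
    Continuous fun y => exp (-p * (y - β) ^ γ) := by
  have : Continuous fun y : ℝ => (y - β) ^ γ :=
    (continuous_id.sub continuous_const).rpow_const fun _ => Or.inr hγ
  fun_prop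

lemma tendsto_exp_neg_mul_sub_rpow_atTop (hγ : 0 < γ) (hp : 0 < p) :
    Tendsto (fun y => exp (-p * (y - β) ^ γ)) atTop (𝓝 0) := by
  have hpow : Tendsto (fun y : ℝ => (y - β) ^ γ) atTop atTop :=
    (tendsto_rpow_atTop hγ).comp (tendsto_atTop_add_const_right _ (-β) tendsto_id)
  exact tendsto_exp_atBot.comp (hpow.const_mul_atTop_of_neg (neg_neg_of_pos hp))

lemma lintegral_Ioi_weibullRatePDF (hγ : 0 < γ) (hp : 0 < p) {y : ℝ} (hy : β ≤ y) :
    ∫⁻ x in Ioi y, ENNReal.ofReal (weibullRatePDF β γ p x) =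
      ENNReal.ofReal (exp (-p * (y - β) ^ γ)) := by
  have hcont : ContinuousWithinAt (fun y => -exp (-p * (y - β) ^ γ)) (Ici y) y :=
    (continuous_exp_neg_mul_sub_rpow hγ.le).neg.continuousWithinAt
  have hderiv : ∀ x ∈ Ioi y, HasDerivAt (fun y => -exp (-p * (y - β) ^ γ))
      (weibullRatePDF β γ p x) x := fun x hx =>
    hasDerivAt_neg_exp_neg_mul_sub_rpow (hy.trans_lt hx)
  have hnonneg : ∀ x ∈ Ioi y, 0 ≤ weibullRatePDF β γ p x := fun x hx =>
    weibullRatePDF_nonneg hγ.le hp.le (hy.trans hx.out.le)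
  have hlim := (tendsto_exp_neg_mul_sub_rpow_atTop (β := β) hγ hp).neg
  rw [neg_zero] at hlim
  rw [← ofReal_integral_eq_lintegral_ofReal
      (integrableOn_Ioi_deriv_of_nonneg hcont hderiv hnonneg hlim)
      (ae_restrict_of_forall_mem measurableSet_Ioi hnonneg),
    integral_Ioi_of_hasDerivAt_of_nonneg hcont hderiv hnonneg hlim, zero_sub, neg_neg]

lemma lintegral_Ici_weibullRatePDF (hγ : 0 < γ) (hp : 0 < p) :
    ∫⁻ x in Ici β, ENNReal.ofReal (weibullRatePDF β γ p x) = 1 := by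
  rw [← setLIntegral_congr Ioi_ae_eq_Ici, lintegral_Ioi_weibullRatePDF hγ hp le_rfl]
  simp [zero_rpow hγ.ne']

lemma weibullRatePDF_mul_exp (q x : ℝ) (hpq : p + q ≠ 0) :
    weibullRatePDF β γ q x * exp (-p * (x - β) ^ γ) =
      q / (p + q) * weibullRatePDF β γ (p + q) x := by
  unfold weibullRatePDF
  rw [show -(p + q) * (x - β) ^ γ = -q * (x - β) ^ γ + -p * (x - β) ^ γ by ring, exp_add]
  field_simp

end RateForm

section Weibull

variable {α β γ : ℝ}

lemma weibullPDF_eq_weibullRatePDF (hα : 0 < α) {x : ℝ} (hx : β ≤ x) :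
    weibullPDF α β γ x = weibullRatePDF β γ (α ^ γ)⁻¹ x := by
  have hxβ : 0 ≤ x - β := sub_nonneg.2 hx
  have hαγ : α ^ γ = α ^ (γ - 1) * α := by
    rw [← rpow_add_one hα.ne', sub_add_cancel]
  have : α ^ (γ - 1) ≠ 0 := (rpow_pos_of_pos hα _).ne'
  rw [weibullPDF, if_pos hx, weibullRatePDF, div_rpow hxβ hα.le, div_rpow hxβ hα.le, hαγ]
  field_simp

lemma measurable_weibullPDF : Measurable (weibullPDF α β γ) :=
  Measurable.ite measurableSet_Ici (by fun_prop) measurable_const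

lemma weibullMeasure_Ioi (hα : 0 < α) (hγ : 0 < γ) {y : ℝ} (hy : β ≤ y) :
    weibullMeasure α β γ (Ioi y) = ENNReal.ofReal (exp (-(α ^ γ)⁻¹ * (y - β) ^ γ)) := by
  rw [weibullMeasure, withDensity_apply _ measurableSet_Ioi,
    setLIntegral_congr_fun measurableSet_Ioi fun x hx => by
      rw [weibullPDF_eq_weibullRatePDF hα (hy.trans hx.out.le)]]
  exact lintegral_Ioi_weibullRatePDF hγ (inv_pos.2 (rpow_pos_of_pos hα γ)) hy

end Weibull

instance (α β γ : ℝ) : SFinite (weibullMeasure α β γ) := by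
  rw [weibullMeasure]
  infer_instance

lemma lintegral_weibullPDF_mul_weibullMeasure_Ioi {α α' β γ : ℝ} (hα : 0 < α)
    (hα' : 0 < α') (hγ : 0 < γ) :
    ∫⁻ y, ENNReal.ofReal (weibullPDF α' β γ y) * weibullMeasure α β γ (Ioi y) =
      ENNReal.ofReal ((α' ^ γ)⁻¹ / ((α ^ γ)⁻¹ + (α' ^ γ)⁻¹)) := by
  set p := (α ^ γ)⁻¹
  set q := (α' ^ γ)⁻¹
  have hp : 0 < p := inv_pos.2 (rpow_pos_of_pos hα γ)
  have hq : 0 < q := inv_pos.2 (rpow_pos_of_pos hα' γ)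
  have hintegrand : ∀ y,
      ENNReal.ofReal (weibullPDF α' β γ y) * weibullMeasure α β γ (Ioi y) = (Ici β).indicator
        (fun y => ENNReal.ofReal (q / (p + q)) * ENNReal.ofReal (weibullRatePDF β γ (p + q) y))
        y := by
    intro y
    by_cases hy : y ∈ Ici β
    · rw [indicator_of_mem hy, weibullMeasure_Ioi hα hγ hy, weibullPDF_eq_weibullRatePDF hα' hy,
        ← ENNReal.ofReal_mul (weibullRatePDF_nonneg hγ.le hq.le hy),
        weibullRatePDF_mul_exp q y (by positivity),
        ENNReal.ofReal_mul (by positivity)]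
    · rw [indicator_of_notMem hy, weibullPDF, if_neg (show ¬β ≤ y from hy),
        ENNReal.ofReal_zero, zero_mul]
  simp_rw [hintegrand]
  rw [lintegral_indicator measurableSet_Ici, lintegral_const_mul' _ _ ENNReal.ofReal_ne_top,
    lintegral_Ici_weibullRatePDF hγ (by positivity), mul_one]

/-- **Pythagorean Won-Loss Formula.** If `X`, `Y` are independent Weibulls with
parameters `(αRS, β, γ)` and `(αRA, β, γ)`, then
`Prob(X > Y) = αRS^γ / (αRS^γ + αRA^γ)`. Independence is encoded via the
product measure. -/
theorem pythagorean_won_loss (αRS αRA β γ : ℝ) (hRS : 0 < αRS) (hRA : 0 < αRA)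
    (hγ : 0 < γ) :
    ((weibullMeasure αRS β γ).prod (weibullMeasure αRA β γ)) {p : ℝ × ℝ | p.2 < p.1} =
      ENNReal.ofReal (αRS ^ γ / (αRS ^ γ + αRA ^ γ)) := by
  have hsurvival : Measurable fun y => weibullMeasure αRS β γ (Ioi y) :=
    Antitone.measurable fun _ _ h => measure_mono (Ioi_subset_Ioi h)
  rw [Measure.prod_apply_symm (measurableSet_lt measurable_snd measurable_fst)]
  change ∫⁻ y, weibullMeasure αRS β γ (Ioi y)
    ∂volume.withDensity (fun y => ENNReal.ofReal (weibullPDF αRA β γ y)) = _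
  rw [lintegral_withDensity_eq_lintegral_mul _ measurable_weibullPDF.ennreal_ofReal hsurvival,
    Pi.mul_def, lintegral_weibullPDF_mul_weibullMeasure_Ioi hRS hRA hγ]
  have hRSγ := (rpow_pos_of_pos hRS γ).ne'
  have hRAγ := (rpow_pos_of_pos hRA γ).ne'
  congr 1
  field_simp
  ring
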